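/- arXiv:2603.24612 — 2 statements merged into one kernel-verified Lean document; each statement's English description precedes it below -/
import Mathlib

section
/- The determinant of the transformation matrix T = [[-33/23, 3005/888, (607835112λn − 7773334823)/(4864016448n)], [-n, -21n, 257/24], [175916243/65729952 + 4791493λn/1825832, 21λn + 257/12, (7622102628λn + 7773334823)/(2432008224n)]] is nonzero for all λ > 0 and n > 0 such that 71175864·λn ≠ 30452821, hence T is invertible. -/
open Matrix

theorem stmt12 (l n : ℝ) (hl : 0 < l) (hn : 0 < n)
    (h : 71175864 * l * n ≠ 30452821) :
    let T : Matrix (Fin 3) (Fin 3) ℝ :=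
      !![-33/23, 3005/888, (607835112*l*n - 7773334823)/(4864016448*n);
         -n, -21*n, 257/24;
         175916243/65729952 + 4791493*l*n/1825832, 21*l*n + 257/12,
           (7622102628*l*n + 7773334823)/(2432008224*n)]
    T.det ≠ 0 ∧ IsUnit T := by
  intro T
  have hdet : T.det =
      (14209943921873/3333662492224) * (l*n)^2
        + (12941475933157262669/27382703711127936) * (l*n)
        + 2824600259839476674377/5914664001603634176 := by
    simp only [T, Matrix.det_fin_three, Matrix.cons_val', Matrix.cons_val_zero,
      Matrix.cons_val_one, Matrix.head_cons, Matrix.empty_val', Matrix.cons_val_fin_one,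
      Matrix.head_fin_const, Matrix.of_apply, Matrix.cons_val_two, Matrix.tail_cons]
    field_simp
    ring
  have hpos : 0 < T.det := by
    rw [hdet]
    have hx : 0 < l * n := mul_pos hl hn
    positivity
  exact ⟨ne_of_gt hpos, (Matrix.isUnit_iff_isUnit_det T).mpr (isUnit_iff_ne_zero.mpr (ne_of_gt hpos))⟩
end

section
/- For λ₁, n₁ in the intervals stated (λ₁ ∈ (48083713211257141381227/9444732965739290427392, 48083713211499877152963/9444732965739290427392), n₁ in the corresponding high-precision interval) and μ₁ = -(607835112λ₁n₁ − 7773334823)/(4864016448n₁), the matrix A = [[-17/24, -2, -λ₁], [-33/23, -10, -μ₁], [-n₁, -21n₁, -99/37]] satisfies det(A) < 0. -/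
open Matrix

theorem stmt16 (l₁ n₁ μ₁ : ℝ)
    (hl : l₁ ∈ Set.Ioo ((48083713211257141381227 : ℝ)/9444732965739290427392)
      ((48083713211499877152963 : ℝ)/9444732965739290427392))
    (hn : n₁ ∈ Set.Ioo
      ((18617876387518095278417715070016705816645420386546066217507077513538675027145 : ℝ)/
        57896044618658097711785492504343953926634992332820282019728792003956564819968)
      ((9308938193759047639208857535008352908322710193273033108753538756769337513573 : ℝ)/
        28948022309329048855892746252171976963317496166410141009864396001978282409984))
    (hμ : μ₁ = -(607835112 * l₁ * n₁ - 7773334823) / (4864016448 * n₁)) :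
    (!![-17/24, -2, -l₁; -33/23, -10, -μ₁; -n₁, -21*n₁, -99/37] :
      Matrix (Fin 3) (Fin 3) ℝ).det < 0 := by
  obtain ⟨hl1, hl2⟩ := hl
  obtain ⟨hn1, hn2⟩ := hn
  have hn0 : (0:ℝ) < n₁ := lt_trans (by norm_num) hn1
  have hln : (48083713211257141381227 : ℝ)/9444732965739290427392 *
      ((18617876387518095278417715070016705816645420386546066217507077513538675027145 : ℝ)/
        57896044618658097711785492504343953926634992332820282019728792003956564819968)
      ≤ l₁ * n₁ := by
    apply le_of_lt
    exact mul_lt_mul' (le_of_lt hl1) hn1 (by positivity) (lt_trans (by norm_num) hl1)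
  subst hμ
  rw [Matrix.det_fin_three]
  simp only [Matrix.cons_val', Matrix.cons_val_zero, Matrix.cons_val_one, Matrix.head_cons,
    Matrix.empty_val', Matrix.cons_val_fin_one, Matrix.head_fin_const, Matrix.of_apply,
    Matrix.cons_val_two, Matrix.tail_cons]
  have hne : n₁ ≠ 0 := ne_of_gt hn0
  have key : -17 / 24 * -10 * (-99 / 37) - -17 / 24 * -(-(607835112 * l₁ * n₁ - 7773334823) / (4864016448 * n₁)) * (-21 * n₁) -
            -2 * (-33 / 23) * (-99 / 37) +
          -2 * -(-(607835112 * l₁ * n₁ - 7773334823) / (4864016448 * n₁)) * -n₁ +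
        -l₁ * (-33 / 23) * (-21 * n₁) -
      -l₁ * -10 * -n₁
      = (361931777585 : ℝ)/38912131584 - (952618405 : ℝ)/43819968 * (l₁ * n₁) := by
    field_simp
    ring
  rw [key]
  nlinarith [hln]
end
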